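/- arXiv:2506.02800 — 5 statements merged into one kernel-verified Lean document; each statement's English description precedes it below -/
import Mathlib

section
/- Define d_k = (k-2)²(k+2)/(4k²), a_k = (d_k - d_{k+2})², and ε_k = -2 d_{k+2}² + d_k d_{k+2} + d_{k+2} d_{k+4}. Then for every integer k ≥ 1, a_k a_{k+2} - ε_k² > 0; in particular a_k a_{k+2} > 1/100. -/
noncomputable def d (k : ℕ) : ℝ := ((k : ℝ) - 2) ^ 2 * ((k : ℝ) + 2) / (4 * (k : ℝ) ^ 2)

noncomputable def a (k : ℕ) : ℝ := (d k - d (k + 2)) ^ 2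

noncomputable def eps (k : ℕ) : ℝ :=
  -2 * d (k + 2) ^ 2 + d k * d (k + 2) + d (k + 2) * d (k + 4)

/-!
With `u = d k - d (k + 2)`, `v = d (k + 2) - d (k + 4)` and `c = d (k + 2)` we have `a k = u ^ 2`,
`a (k + 2) = v ^ 2` and `eps k = c * (u - v)`, so the determinant is `(u * v) ^ 2 - (c * (u - v)) ^ 2`.
For `k ≥ 4` both `u` and `v` lie in `[-1/2 - δ, -1/2]` with `δ = 2 / (k + 2) ^ 2`, hence
`u * v ≥ 1/4`, while `|c * (u - v)| ≤ c * δ < 1/4`. The cases `k ≤ 3` are checked numerically.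
-/

open Set

lemma quarter_le_mul_of_le_neg_half {u v : ℝ} (hu : u ≤ -1 / 2) (hv : v ≤ -1 / 2) :
    1 / 4 ≤ u * v := by
  nlinarith

lemma abs_mul_sub_le_mul_of_mem_Icc {u v c x δ : ℝ} (hu : u ∈ Icc (x - δ) x)
    (hv : v ∈ Icc (x - δ) x) (hc : 0 ≤ c) : |c * (u - v)| ≤ c * δ := by
  rw [abs_mul, abs_of_nonneg hc]
  exact mul_le_mul_of_nonneg_left
    (abs_sub_le_iff.2 ⟨by linarith [hu.2, hv.1], by linarith [hu.1, hv.2]⟩) hc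

lemma d_nonneg (k : ℕ) : 0 ≤ d k := by
  unfold d
  positivity

lemma d_add_two_mul_lt (k : ℕ) : d (k + 2) * (2 / ((k : ℝ) + 2) ^ 2) < 1 / 4 := by
  have hk : (0 : ℝ) ≤ k := k.cast_nonneg
  unfold d
  push_cast
  rw [div_mul_div_comm, div_lt_div_iff₀ (by positivity) (by norm_num)]
  nlinarith [pow_pos (show (0 : ℝ) < k + 2 by linarith) 3, sq_nonneg (k : ℝ)]

lemma d_sub_d_add_two {k : ℕ} (hk : k ≠ 0) :
    d k - d (k + 2) = -1 / 2 - 2 * ((k : ℝ) ^ 2 - 2 * k - 4) / ((k : ℝ) ^ 2 * ((k : ℝ) + 2) ^ 2) := by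
  have hx : (k : ℝ) ≠ 0 := by exact_mod_cast hk
  have hx2 : (k : ℝ) + 2 ≠ 0 := by positivity
  unfold d
  push_cast
  field_simp
  ring

lemma d_sub_d_add_two_le {k : ℕ} (hk : 4 ≤ k) : d k - d (k + 2) ≤ -1 / 2 := by
  have hx : (4 : ℝ) ≤ k := by exact_mod_cast hk
  rw [d_sub_d_add_two (by omega), sub_le_self_iff]
  apply div_nonneg _ (by positivity)
  nlinarith

lemma neg_half_sub_le_d_sub_d_add_two {k : ℕ} (hk : k ≠ 0) :
    -1 / 2 - 2 / ((k : ℝ) + 2) ^ 2 ≤ d k - d (k + 2) := by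
  have hx : (0 : ℝ) < k := by positivity
  rw [d_sub_d_add_two hk, sub_le_sub_iff_left, div_le_div_iff₀ (by positivity) (by positivity)]
  nlinarith [pow_pos hx 2, sq_nonneg ((k : ℝ) + 2)]

theorem det_pos (k : ℕ) (hk : 1 ≤ k) :
    0 < a k * a (k + 2) - eps k ^ 2 ∧ 1 / 100 < a k * a (k + 2) := by
  obtain hk4 | hk4 := lt_or_ge k 4
  · interval_cases k <;> norm_num [a, eps, d]
  set u := d k - d (k + 2)
  set v := d (k + 2) - d (k + 4)
  set c := d (k + 2)
  set δ : ℝ := 2 / ((k : ℝ) + 2) ^ 2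
  have hu : u ∈ Icc (-1 / 2 - δ) (-1 / 2) :=
    ⟨neg_half_sub_le_d_sub_d_add_two (by omega), d_sub_d_add_two_le hk4⟩
  have hv : v ∈ Icc (-1 / 2 - δ) (-1 / 2) := by
    refine ⟨le_trans ?_ (neg_half_sub_le_d_sub_d_add_two (k := k + 2) (by omega)),
      d_sub_d_add_two_le (k := k + 2) (by omega)⟩
    push_cast
    unfold δ
    gcongr
    linarith
  have huv : 1 / 4 ≤ u * v := quarter_le_mul_of_le_neg_half hu.2 hv.2
  have hcuv : |c * (u - v)| < u * v :=
    (abs_mul_sub_le_mul_of_mem_Icc hu hv (d_nonneg _)).trans_lt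
      ((d_add_two_mul_lt k).trans_le huv)
  have hprod : a k * a (k + 2) = (u * v) ^ 2 := by unfold a; ring
  have heps : eps k = c * (u - v) := by unfold eps; ring
  rw [hprod, heps, ← sq_abs (c * (u - v))]
  exact ⟨sub_pos.2 (pow_lt_pow_left₀ hcuv (abs_nonneg _) two_ne_zero), by nlinarith⟩
end

section
/- Define d_k = (k-2)²(k+2)/(4k²), a_k = (d_k - d_{k+2})², and ε_k = -2 d_{k+2}² + d_k d_{k+2} + d_{k+2} d_{k+4}. Then for every integer k ≥ 1, the symmetric matrix A_k = [[a_k, ε_k],[ε_k, a_{k+2}]] is positive definite. -/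
lemma posdef2 {A B E : ℝ} (hA : 0 < A) (hD : 0 < A * B - E ^ 2) :
    (!![A, E; E, B] : Matrix (Fin 2) (Fin 2) ℝ).PosDef := by
  constructor
  · ext i j
    fin_cases i <;> fin_cases j <;>
      simp [Matrix.conjTranspose_apply]
  · intro x hx
    have hx01 : x 0 ≠ 0 ∨ x 1 ≠ 0 := by
      by_contra h
      push_neg at h
      apply hx
      ext i
      fin_cases i <;> simp [h.1, h.2]
    have hval : (x.sum fun i xi ↦ x.sum fun j xj ↦
          star xi * (!![A, E; E, B] : Matrix (Fin 2) (Fin 2) ℝ) i j * xj)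
        = A * x 0 ^ 2 + 2 * E * x 0 * x 1 + B * x 1 ^ 2 := by
      simp [Finsupp.sum_fintype, Fin.sum_univ_two]
      ring
    rw [hval]
    rcases eq_or_ne (x 1) 0 with h1 | h1
    · have h0 : x 0 ≠ 0 := by tauto
      rw [h1]
      have : 0 < A * x 0 ^ 2 := by positivity
      nlinarith
    · have key : 0 < (A * x 0 + E * x 1) ^ 2 + (A * B - E ^ 2) * x 1 ^ 2 := by
        have : 0 < (A * B - E ^ 2) * x 1 ^ 2 := by positivity
        nlinarith [sq_nonneg (A * x 0 + E * x 1)]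
      nlinarith

theorem Ak_posDef (k : ℕ) (hk : 1 ≤ k) :
    (!![a k, eps k; eps k, a (k + 2)] : Matrix (Fin 2) (Fin 2) ℝ).PosDef := by
  rcases eq_or_lt_of_le hk with h1 | h2
  · -- k = 1
    subst h1
    apply posdef2 <;> norm_num [a, eps, d]
  · -- 2 ≤ k
    obtain ⟨j, rfl⟩ : ∃ j, k = j + 2 := ⟨k - 2, by omega⟩
    have hj2 : (0 : ℝ) < (j : ℝ) + 2 := by positivity
    have hj4 : (0 : ℝ) < (j : ℝ) + 4 := by positivity
    have hj6 : (0 : ℝ) < (j : ℝ) + 6 := by positivity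
    have ha : a (j + 2)
        = ((j : ℝ) ^ 4 + 12 * (j : ℝ) ^ 3 + 56 * (j : ℝ) ^ 2 + 104 * (j : ℝ) + 48) ^ 2
          / (2 * ((j : ℝ) + 2) ^ 2 * ((j : ℝ) + 4) ^ 2) ^ 2 := by
      unfold a d
      push_cast
      field_simp
      ring
    have hdet : a (j + 2) * a (j + 2 + 2) - eps (j + 2) ^ 2
        = (4 * (j : ℝ) ^ 16 + 256 * (j : ℝ) ^ 15 + 7680 * (j : ℝ) ^ 14
            + 143104 * (j : ℝ) ^ 13 + 1850112 * (j : ℝ) ^ 12 + 17562624 * (j : ℝ) ^ 11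
            + 126369280 * (j : ℝ) ^ 10 + 701454336 * (j : ℝ) ^ 9 + 3027224576 * (j : ℝ) ^ 8
            + 10154033152 * (j : ℝ) ^ 7 + 26255360000 * (j : ℝ) ^ 6
            + 51446939648 * (j : ℝ) ^ 5 + 74241490944 * (j : ℝ) ^ 4
            + 75380948992 * (j : ℝ) ^ 3 + 49970282496 * (j : ℝ) ^ 2
            + 18897960960 * (j : ℝ) + 2993946624)
          / (64 * ((j : ℝ) + 2) ^ 4 * ((j : ℝ) + 4) ^ 8 * ((j : ℝ) + 6) ^ 4) := by
      unfold a eps d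
      push_cast
      field_simp
      ring
    apply posdef2
    · rw [ha]
      positivity
    · rw [hdet]
      positivity
end

section
/- Define a_k and ε_k as above, and let λ_k¹ = (a_k + a_{k+2} - √((a_k - a_{k+2})² + 4ε_k²))/2 be the smaller eigenvalue of A_k = [[a_k, ε_k],[ε_k, a_{k+2}]]. Then for every integer k ≥ 1, λ_k¹ > 1/50. -/
theorem min_sub_abs_le_smaller_eigenvalue (b c e : ℝ) :
    min b c - |e| ≤ (b + c - √((b - c) ^ 2 + 4 * e ^ 2)) / 2 := by
  have hsqrt : √((b - c) ^ 2 + 4 * e ^ 2) ≤ |b - c| + 2 * |e| := by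
    rw [Real.sqrt_le_iff]
    refine ⟨by positivity, ?_⟩
    nlinarith [sq_abs (b - c), sq_abs e, abs_nonneg (b - c), abs_nonneg e]
  have := min_le_left b c
  have := min_le_right b c
  rcases abs_cases (b - c) with ⟨hbc, -⟩ | ⟨hbc, -⟩ <;> linarith

theorem lt_sub_abs_of_lt_sub_of_lt_add {t x e : ℝ} (hsub : t < x - e) (hadd : t < x + e) :
    t < x - |e| := by
  rcases abs_cases e with ⟨he, -⟩ | ⟨he, -⟩ <;> linarith

theorem one_fiftieth_lt_a_add_two_sub_abs_eps (k : ℕ) (hk : 1 ≤ k) :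
    1 / 50 < a (k + 2) - |eps k| := by
  obtain ⟨n, rfl⟩ := Nat.exists_eq_add_of_le' hk
  refine lt_sub_abs_of_lt_sub_of_lt_add ?_ ?_ <;>
  · unfold a eps d
    push_cast
    rw [← sub_pos]
    field_simp
    ring_nf
    positivity

theorem one_fiftieth_lt_a_sub_abs_eps (k : ℕ) (hk : 1 ≤ k) : 1 / 50 < a k - |eps k| := by
  obtain ⟨_ | n, rfl⟩ := Nat.exists_eq_add_of_le' hk
  · have he : eps 1 = 62 / 405 := by unfold eps d; norm_num
    have ha : a 1 = 121 / 324 := by unfold a d; norm_num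
    rw [he, ha, abs_of_pos (by norm_num)]
    norm_num
  · refine lt_sub_abs_of_lt_sub_of_lt_add ?_ ?_ <;>
    · unfold a eps d
      push_cast
      rw [← sub_pos]
      field_simp
      ring_nf
      positivity

theorem lambda1_lower_bound (k : ℕ) (hk : 1 ≤ k) :
    1 / 50 <
      (a k + a (k + 2) - Real.sqrt ((a k - a (k + 2)) ^ 2 + 4 * eps k ^ 2)) / 2 := by
  calc 1 / 50 < min (a k) (a (k + 2)) - |eps k| := by
        rw [← min_sub_sub_right]
        exact lt_min (one_fiftieth_lt_a_sub_abs_eps k hk)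
          (one_fiftieth_lt_a_add_two_sub_abs_eps k hk)
    _ ≤ _ := min_sub_abs_le_smaller_eigenvalue _ _ _
end

section
/- Define a_k and ε_k as above, and let λ_k² = (a_k + a_{k+2} + √((a_k - a_{k+2})² + 4ε_k²))/2 be the larger eigenvalue of A_k = [[a_k, ε_k],[ε_k, a_{k+2}]]. Then for every integer k ≥ 1, λ_k² < 3/5. -/
theorem larger_eigenvalue_lt_of_gershgorin {p q e c : ℝ} (hp : p + |e| < c)
    (hq : q + |e| < c) : (p + q + √((p - q) ^ 2 + 4 * e ^ 2)) / 2 < c := by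
  have hpos : 0 < 2 * c - p - q := by linarith [abs_nonneg e]
  have hprod : |e| ^ 2 < (c - p) * (c - q) :=
    pow_two |e| ▸ mul_lt_mul'' (by linarith) (by linarith) (abs_nonneg e) (abs_nonneg e)
  have hdisc : (p - q) ^ 2 + 4 * e ^ 2 < (2 * c - p - q) ^ 2 := by nlinarith [sq_abs e]
  linarith [(Real.sqrt_lt' hpos).mpr hdisc]

theorem d_add_two_sub_d (k : ℕ) (hk : k ≠ 0) :
    d (k + 2) - d k = 1 / 2 + 2 * ((k : ℝ) ^ 2 - 2 * k - 4) / ((k : ℝ) ^ 2 * (k + 2) ^ 2) := by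
  have hk : (k : ℝ) ≠ 0 := Nat.cast_ne_zero.mpr hk
  simp only [d]
  push_cast
  field_simp
  ring

theorem eps_eq (k : ℕ) (hk : k ≠ 0) :
    eps k = -2 * ((k : ℝ) ^ 3 - 16 * k - 16) / (((k : ℝ) + 2) ^ 4 * (k + 4)) := by
  have hk : (k : ℝ) ≠ 0 := Nat.cast_ne_zero.mpr hk
  simp only [eps, d]
  push_cast
  field_simp
  ring

theorem a_lt (k : ℕ) (hk : 1 ≤ k) : a k < 2 / 5 := by
  have hx : (1 : ℝ) ≤ k := by exact_mod_cast hk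
  set x : ℝ := (k : ℝ)
  have hden : 0 < x ^ 2 * (x + 2) ^ 2 := by positivity
  have hlo : -9 / 8 ≤ 2 * (x ^ 2 - 2 * x - 4) / (x ^ 2 * (x + 2) ^ 2) := by
    have : 3 ≤ x * (x + 2) := by nlinarith
    rw [le_div_iff₀ hden]
    nlinarith [sq_nonneg (x - 1)]
  have hhi : 2 * (x ^ 2 - 2 * x - 4) / (x ^ 2 * (x + 2) ^ 2) ≤ 1 / 8 := by
    rw [div_le_iff₀ hden]
    nlinarith
  have hdiff : |d (k + 2) - d k| ≤ 5 / 8 := by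
    rw [d_add_two_sub_d k (by omega), abs_le]
    constructor <;> linarith
  calc a k = |d (k + 2) - d k| ^ 2 := by rw [a, sq_abs, ← neg_sub, neg_sq]
    _ ≤ (5 / 8) ^ 2 := by gcongr
    _ < 2 / 5 := by norm_num

theorem abs_eps_lt (k : ℕ) (hk : 1 ≤ k) : |eps k| < 1 / 5 := by
  have hx : (1 : ℝ) ≤ k := by exact_mod_cast hk
  set x : ℝ := (k : ℝ)
  have hx0 : 0 < x := by linarith
  have hden : 0 < (x + 2) ^ 4 * (x + 4) := by positivity
  have hcube : 10 * x ^ 3 < (x + 2) ^ 4 * (x + 4) := by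
    nlinarith [pow_pos hx0 3, pow_pos hx0 4, pow_pos hx0 5]
  have hlin : 160 * (x + 1) < (x + 2) ^ 4 * (x + 4) := by
    nlinarith [pow_pos hx0 3, pow_pos hx0 4, pow_pos hx0 5]
  rw [eps_eq k (by omega), abs_lt, lt_div_iff₀ hden, div_lt_iff₀ hden]
  constructor <;> linarith [pow_pos hx0 3]

theorem lambda2_upper_bound (k : ℕ) (hk : 1 ≤ k) :
    (a k + a (k + 2) + Real.sqrt ((a k - a (k + 2)) ^ 2 + 4 * eps k ^ 2)) / 2 < 3 / 5 := by
  have hε := abs_eps_lt k hk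
  have hk₀ := a_lt k hk
  have hk₂ := a_lt (k + 2) (by omega)
  exact larger_eigenvalue_lt_of_gershgorin (by linarith) (by linarith)
end

section
/- Let f : ℝ → ℝ be odd, 2π-periodic, continuously differentiable with f(0) = f(π) = 0, and suppose ∫_{-π}^{π} (f'(θ))²/sin²θ dθ < ∞. Then there is an absolute constant C > 0 such that sup_θ |f(θ)/sin θ| ≤ C (∫_{-π}^{π} (f'(θ))²/sin²θ dθ)^{1/2}. -/
open Real MeasureTheory

lemma amgm_opt {A B X : ℝ} (hA : 0 ≤ A) (hB : 0 ≤ B)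
    (h : ∀ t : ℝ, 0 < t → X ≤ (t * A + B / t) / 2) : X ≤ Real.sqrt (A * B) := by
  rcases hA.eq_or_lt with hA0 | hA0
  · by_contra hX
    push_neg at hX
    have hX0 : 0 < X := lt_of_le_of_lt (Real.sqrt_nonneg _) hX
    have hB0 : 0 < B := by
      rcases hB.eq_or_lt with hB0 | hB0
      · have := h 1 one_pos
        rw [← hA0, ← hB0] at this
        norm_num at this
        linarith
      · exact hB0
    have h2 := h (B / X) (by positivity)
    rw [← hA0] at h2
    have e : B / (B / X) = X := by field_simp
    rw [mul_zero, zero_add, e] at h2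
    linarith
  · rcases hB.eq_or_lt with hB0 | hB0
    · by_contra hX
      push_neg at hX
      have hX0 : 0 < X := lt_of_le_of_lt (Real.sqrt_nonneg _) hX
      have h2 := h (X / A) (by positivity)
      rw [← hB0] at h2
      have e : X / A * A = X := by field_simp
      rw [e] at h2
      norm_num at h2
      linarith
    · have sA : 0 < Real.sqrt A := Real.sqrt_pos.mpr hA0
      have sB : 0 < Real.sqrt B := Real.sqrt_pos.mpr hB0
      have eA : Real.sqrt A * Real.sqrt A = A := Real.mul_self_sqrt hA
      have eB : Real.sqrt B * Real.sqrt B = B := Real.mul_self_sqrt hB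
      have h2 := h (Real.sqrt B / Real.sqrt A) (by positivity)
      rw [Real.sqrt_mul hA]
      have e1 : Real.sqrt B / Real.sqrt A * A = Real.sqrt A * Real.sqrt B := by
        field_simp; nlinarith
      have e2 : B / (Real.sqrt B / Real.sqrt A) = Real.sqrt A * Real.sqrt B := by
        rw [div_div_eq_mul_div]; field_simp; nlinarith
      rw [e1, e2] at h2
      linarith

lemma segment_bound (g : ℝ → ℝ) (hg : Continuous g) (a b : ℝ) (hab : a ≤ b)
    {I B : ℝ} (hI : 0 ≤ I)
    (hwi : IntervalIntegrable (fun s => g s ^ 2 / Real.sin s ^ 2) volume a b)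
    (hw : (∫ s in a..b, g s ^ 2 / Real.sin s ^ 2) ≤ I)
    (hsin : (∫ s in a..b, Real.sin s ^ 2) ≤ B)
    (hpos : ∀ᵐ s ∂(volume.restrict (Set.Icc a b)), 0 < Real.sin s)
    (hamgm : ∀ A B X : ℝ, 0 ≤ A → 0 ≤ B →
      (∀ t : ℝ, 0 < t → X ≤ (t * A + B / t) / 2) → X ≤ Real.sqrt (A * B)) :
    |∫ s in a..b, g s| ≤ Real.sqrt (I * B) := by
  have hB : 0 ≤ B :=
    le_trans (intervalIntegral.integral_nonneg hab (fun u _ => sq_nonneg _)) hsin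
  refine hamgm I B _ hI hB (fun t ht => ?_)
  have hsin2 : IntervalIntegrable (fun s => Real.sin s ^ 2) volume a b :=
    (continuous_sin.pow 2).intervalIntegrable a b
  have hcomb : IntervalIntegrable
      (fun s => t / 2 * (g s ^ 2 / Real.sin s ^ 2) + 1 / (2 * t) * Real.sin s ^ 2)
      volume a b := (hwi.const_mul (t / 2)).add (hsin2.const_mul (1 / (2 * t)))
  calc |∫ s in a..b, g s| ≤ ∫ s in a..b, |g s| :=
        intervalIntegral.abs_integral_le_integral_abs hab
    _ ≤ ∫ s in a..b, (t / 2 * (g s ^ 2 / Real.sin s ^ 2) + 1 / (2 * t) * Real.sin s ^ 2) := by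
        refine intervalIntegral.integral_mono_ae_restrict hab
          (hg.abs.intervalIntegrable a b) hcomb ?_
        filter_upwards [hpos] with s hs
        set w := g s / Real.sin s with hw_def
        have hgw : g s = w * Real.sin s := (div_mul_cancel₀ _ hs.ne').symm
        have e1 : |g s| = |w| * Real.sin s := by
          rw [hgw, abs_mul, abs_of_pos hs]
        have e2 : t / 2 * (g s ^ 2 / Real.sin s ^ 2) + 1 / (2 * t) * Real.sin s ^ 2
            = (t ^ 2 * w ^ 2 + Real.sin s ^ 2) / (2 * t) := by
          rw [hgw]
          field_simp
        rw [e1, e2, le_div_iff₀ (by positivity)]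
        nlinarith [sq_nonneg (t * |w| - Real.sin s), sq_abs w]
    _ = t / 2 * (∫ s in a..b, g s ^ 2 / Real.sin s ^ 2)
        + 1 / (2 * t) * (∫ s in a..b, Real.sin s ^ 2) := by
        rw [intervalIntegral.integral_add (hwi.const_mul _) (hsin2.const_mul _),
          intervalIntegral.integral_const_mul, intervalIntegral.integral_const_mul]
    _ ≤ t / 2 * I + 1 / (2 * t) * B := by
        gcongr <;> positivity
    _ = (t * I + B / t) / 2 := by field_simp

theorem weighted_hardy_torus :
    ∃ C : ℝ, 0 < C ∧
      ∀ f : ℝ → ℝ,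
        (∀ θ, f (-θ) = -f θ) →
        Function.Periodic f (2 * π) →
        ContDiff ℝ 1 f →
        f 0 = 0 → f π = 0 →
        IntervalIntegrable (fun θ => (deriv f θ) ^ 2 / Real.sin θ ^ 2) volume (-π) π →
        ∀ θ : ℝ, |f θ / Real.sin θ| ≤
          C * Real.sqrt (∫ θ in (-π)..π, (deriv f θ) ^ 2 / Real.sin θ ^ 2) := by
  refine ⟨2, two_pos, ?_⟩
  intro f hodd hper hf h0 hπ hint
  set I := ∫ θ in (-π)..π, (deriv f θ) ^ 2 / Real.sin θ ^ 2 with hIdef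
  have hpi : (0:ℝ) < π := pi_pos
  have hππ : -π ≤ π := by linarith
  have hI : 0 ≤ I := intervalIntegral.integral_nonneg hππ (fun u _ => by positivity)
  have hg : Continuous (deriv f) := hf.continuous_deriv le_rfl
  have hdiff : Differentiable ℝ f := hf.differentiable one_ne_zero
  have hne0 : ∀ᵐ s : ℝ ∂volume, s ≠ 0 := by
    refine (ae_iff).mpr ?_
    simp only [ne_eq, not_not, Set.setOf_eq_eq_singleton]
    exact Real.volume_singleton
  have hneπ : ∀ᵐ s : ℝ ∂volume, s ≠ π := by
    refine (ae_iff).mpr ?_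
    simp only [ne_eq, not_not, Set.setOf_eq_eq_singleton]
    exact Real.volume_singleton
  -- key pointwise bound on [0, π]
  have key : ∀ x, 0 ≤ x → x ≤ π → |f x| ≤ 2 * Real.sqrt I * Real.sin x := by
    intro x hx0 hxπ
    have hsinx : 0 ≤ Real.sin x := Real.sin_nonneg_of_nonneg_of_le_pi hx0 hxπ
    have sqrt_step : Real.sqrt (I * (π / 2 * Real.sin x ^ 2)) ≤ 2 * Real.sqrt I * Real.sin x := by
      have h4 : I * (π / 2 * Real.sin x ^ 2) ≤ (2 * Real.sqrt I * Real.sin x) ^ 2 := by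
        have e : Real.sqrt I ^ 2 = I := Real.sq_sqrt hI
        nlinarith [Real.pi_le_four, sq_nonneg (Real.sin x), mul_nonneg hI (sq_nonneg (Real.sin x))]
      calc Real.sqrt (I * (π / 2 * Real.sin x ^ 2))
          ≤ Real.sqrt ((2 * Real.sqrt I * Real.sin x) ^ 2) := Real.sqrt_le_sqrt h4
        _ = 2 * Real.sqrt I * Real.sin x := Real.sqrt_sq (by positivity)
    rcases le_total x (π / 2) with hx2 | hx2
    · -- case 0 ≤ x ≤ π/2 : f x = ∫_0^x deriv f
      have hftc : (∫ s in (0:ℝ)..x, deriv f s) = f x - f 0 :=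
        intervalIntegral.integral_deriv_eq_sub (fun y _ => hdiff y)
          (hg.intervalIntegrable 0 x)
      have hfx : f x = ∫ s in (0:ℝ)..x, deriv f s := by rw [hftc, h0, sub_zero]
      have hsub : Set.uIcc (0:ℝ) x ⊆ Set.uIcc (-π) π := by
        rw [Set.uIcc_of_le hx0, Set.uIcc_of_le hππ]
        exact Set.Icc_subset_Icc (by linarith) (by linarith)
      have hwi : IntervalIntegrable (fun s => (deriv f s) ^ 2 / Real.sin s ^ 2) volume 0 x :=
        hint.mono_set hsub
      have hw : (∫ s in (0:ℝ)..x, (deriv f s) ^ 2 / Real.sin s ^ 2) ≤ I :=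
        intervalIntegral.integral_mono_interval (by linarith) hx0 hxπ
          (Filter.Eventually.of_forall fun s => by positivity) hint
      have hsin : (∫ s in (0:ℝ)..x, Real.sin s ^ 2) ≤ π / 2 * Real.sin x ^ 2 := by
        calc (∫ s in (0:ℝ)..x, Real.sin s ^ 2)
            ≤ ∫ _ in (0:ℝ)..x, Real.sin x ^ 2 := by
              refine intervalIntegral.integral_mono_on hx0
                ((continuous_sin.pow 2).intervalIntegrable 0 x)
                (intervalIntegrable_const) (fun s hs => ?_)
              have h1 : 0 ≤ Real.sin s :=
                Real.sin_nonneg_of_nonneg_of_le_pi hs.1 (by linarith [hs.2])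
              have h2 : Real.sin s ≤ Real.sin x := by
                refine Real.strictMonoOn_sin.monotoneOn ⟨by linarith [hs.1], by linarith [hs.2]⟩
                  ⟨by linarith, hx2⟩ hs.2
              nlinarith
          _ = x * Real.sin x ^ 2 := by simp
          _ ≤ π / 2 * Real.sin x ^ 2 := by nlinarith [sq_nonneg (Real.sin x)]
      have hpos : ∀ᵐ s ∂(volume.restrict (Set.Icc (0:ℝ) x)), 0 < Real.sin s := by
        filter_upwards [ae_restrict_mem measurableSet_Icc, ae_restrict_of_ae hne0] with s hs hsne
        exact Real.sin_pos_of_pos_of_lt_pi (lt_of_le_of_ne hs.1 (Ne.symm hsne))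
          (by linarith [hs.2])
      have := segment_bound (deriv f) hg 0 x hx0 hI hwi hw hsin hpos
        (fun A B X hA hB h => amgm_opt hA hB h)
      rw [← hfx] at this
      exact this.trans sqrt_step
    · -- case π/2 ≤ x ≤ π : f x = -∫_x^π deriv f
      have hftc : (∫ s in x..π, deriv f s) = f π - f x :=
        intervalIntegral.integral_deriv_eq_sub (fun y _ => hdiff y)
          (hg.intervalIntegrable x π)
      have hfx : |f x| = |∫ s in x..π, deriv f s| := by
        rw [hftc, hπ, zero_sub, abs_neg]
      have hsub : Set.uIcc x π ⊆ Set.uIcc (-π) π := by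
        rw [Set.uIcc_of_le hxπ, Set.uIcc_of_le hππ]
        exact Set.Icc_subset_Icc (by linarith) le_rfl
      have hwi : IntervalIntegrable (fun s => (deriv f s) ^ 2 / Real.sin s ^ 2) volume x π :=
        hint.mono_set hsub
      have hw : (∫ s in x..π, (deriv f s) ^ 2 / Real.sin s ^ 2) ≤ I :=
        intervalIntegral.integral_mono_interval (by linarith) hxπ le_rfl
          (Filter.Eventually.of_forall fun s => by positivity) hint
      have hsin : (∫ s in x..π, Real.sin s ^ 2) ≤ π / 2 * Real.sin x ^ 2 := by
        calc (∫ s in x..π, Real.sin s ^ 2)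
            ≤ ∫ _ in x..π, Real.sin x ^ 2 := by
              refine intervalIntegral.integral_mono_on hxπ
                ((continuous_sin.pow 2).intervalIntegrable x π)
                (intervalIntegrable_const) (fun s hs => ?_)
              have h1 : 0 ≤ Real.sin s :=
                Real.sin_nonneg_of_nonneg_of_le_pi (by linarith [hs.1]) hs.2
              have h2 : Real.sin s ≤ Real.sin x := by
                rw [← Real.sin_pi_sub s, ← Real.sin_pi_sub x]
                refine Real.strictMonoOn_sin.monotoneOn
                  ⟨by linarith [hs.2], by linarith [hs.1]⟩
                  ⟨by linarith, by linarith⟩ (by linarith [hs.1])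
              nlinarith
          _ = (π - x) * Real.sin x ^ 2 := by simp
          _ ≤ π / 2 * Real.sin x ^ 2 := by nlinarith [sq_nonneg (Real.sin x)]
      have hpos : ∀ᵐ s ∂(volume.restrict (Set.Icc x π)), 0 < Real.sin s := by
        filter_upwards [ae_restrict_mem measurableSet_Icc, ae_restrict_of_ae hneπ] with s hs hsne
        exact Real.sin_pos_of_pos_of_lt_pi (by linarith [hs.1])
          (lt_of_le_of_ne hs.2 hsne)
      have := segment_bound (deriv f) hg x π hxπ hI hwi hw hsin hpos
        (fun A B X hA hB h => amgm_opt hA hB h)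
      rw [← hfx] at this
      exact this.trans sqrt_step
  -- main bound on [0, π]
  have main : ∀ x, 0 ≤ x → x ≤ π → |f x / Real.sin x| ≤ 2 * Real.sqrt I := by
    intro x hx0 hxπ
    by_cases hs : Real.sin x = 0
    · rw [hs, div_zero, abs_zero]; positivity
    · have hspos : 0 < Real.sin x :=
        lt_of_le_of_ne (Real.sin_nonneg_of_nonneg_of_le_pi hx0 hxπ) (Ne.symm hs)
      rw [abs_div, abs_of_pos hspos, div_le_iff₀ hspos]
      exact key x hx0 hxπ
  -- reduce general θ to [0, π]
  intro θ
  have h2π : (0:ℝ) < 2 * π := by positivity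
  set y := toIocMod h2π (-π) θ with hy_def
  have hy : y ∈ Set.Ioc (-π) (-π + 2 * π) := toIocMod_mem_Ioc h2π (-π) θ
  have hyπ : y ≤ π := by linarith [hy.2]
  have hy_eq : y = θ - toIocDiv h2π (-π) θ • (2 * π) :=
    (self_sub_toIocDiv_zsmul h2π (-π) θ).symm
  have hfy : f y = f θ := by rw [hy_eq]; exact hper.sub_zsmul_eq _
  have hsy : Real.sin y = Real.sin θ := by rw [hy_eq]; exact Real.sin_periodic.sub_zsmul_eq _
  rw [← hfy, ← hsy]
  rcases le_or_gt 0 y with hy0 | hy0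
  · exact main y hy0 hyπ
  · have e : f y / Real.sin y = f (-y) / Real.sin (-y) := by
      rw [hodd, Real.sin_neg, neg_div_neg_eq]
    rw [e]
    exact main (-y) (by linarith) (by linarith [hy.1])
end
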